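/- arXiv:1611.09925 — 3 statements merged into one kernel-verified Lean document; each statement's English description precedes it below -/
import Mathlib

section
/- Suppose the IV assumptions and positivity hold, δ^D ≠ 0, U takes values in a finite subset 𝒰 of ℝ, and the two functions u ↦ E[Y1 − Y0 | U=u] and u ↦ ( E[D | Z=1, U=u] − E[D | Z=0, U=u] ) / δ^D are both nondecreasing on 𝒰 (or both nonincreasing on 𝒰). Then the Wald estimand upper-bounds the average treatment effect: δ^Y / δ^D ≥ E[Y1 − Y0]. -/
/-!
Stratify by `U`, with weights `p u = μ(U = u)`. Since `Z` is independent of `U`, each arm mean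
`E[W | Z = z]` is the `p`-average of the stratum means `E[W | Z = z, U = u]`. Within a stratum,
independence of `Y_d` from `(Z, D)` gives
`E[Y | Z = z, U = u] = E[Y0 | U = u] + a u * E[D | Z = z, U = u]`, so with the stratum first stage
`Δ u = E[D | Z = 1, U = u] - E[D | Z = 0, U = u]` we get `δ^D = ∑ p Δ` and `δ^Y = ∑ p a Δ`.
Hence `b = Δ / δ^D` has `p`-mean `1`, the Wald ratio is `∑ p a b`, and the ATE is `∑ p a`;
Chebyshev's sum inequality for the similarly ordered `a` and `b` concludes.
-/

open MeasureTheory ProbabilityTheory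

/-- Conditional mean of `W` given event `A`: `E[W | A] = (∫_A W dμ) / μ(A)`. -/
noncomputable def condMean {Ω : Type*} [MeasurableSpace Ω] (μ : Measure Ω)
    (W : Ω → ℝ) (A : Set Ω) : ℝ :=
  (∫ ω in A, W ω ∂μ) / (μ A).toReal

open Finset

theorem MonovaryOn.sum_mul_sum_le_sum_mul_sum {ι : Type*} {s : Finset ι} {p f g : ι → ℝ}
    (hfg : MonovaryOn f g s) (hp : ∀ i ∈ s, 0 ≤ p i) :
    (∑ i ∈ s, p i * f i) * ∑ i ∈ s, p i * g i
      ≤ (∑ i ∈ s, p i) * ∑ i ∈ s, p i * (f i * g i) := by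
  rw [monovaryOn_iff_forall_mul_nonneg] at hfg
  have hpairs : 0 ≤ ∑ i ∈ s, ∑ j ∈ s, p i * p j * ((f j - f i) * (g j - g i)) :=
    sum_nonneg fun i hi => sum_nonneg fun j hj =>
      mul_nonneg (mul_nonneg (hp i hi) (hp j hj)) (hfg hi hj)
  have hexpand : ∑ i ∈ s, ∑ j ∈ s, p i * p j * ((f j - f i) * (g j - g i))
      = (∑ i ∈ s, p i) * (∑ j ∈ s, p j * (f j * g j))
        + (∑ i ∈ s, p i * (f i * g i)) * (∑ j ∈ s, p j)
        - (∑ i ∈ s, p i * f i) * (∑ j ∈ s, p j * g j)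
        - (∑ i ∈ s, p i * g i) * (∑ j ∈ s, p j * f j) := by
    simp only [sum_mul_sum, ← sum_add_distrib, ← sum_sub_distrib]
    exact sum_congr rfl fun i _ => sum_congr rfl fun j _ => by ring
  linarith

theorem MonovaryOn.sum_mul_le_sum_mul_mul_div {ι : Type*} {s : Finset ι} {p a b Δ : ι → ℝ}
    {δ : ℝ} (hab : MonovaryOn a b s) (hp : ∀ i ∈ s, 0 ≤ p i) (hp1 : ∑ i ∈ s, p i = 1)
    (hδ : δ = ∑ i ∈ s, p i * Δ i) (hδ0 : δ ≠ 0) (hb : ∀ i ∈ s, b i = Δ i / δ) :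
    ∑ i ∈ s, p i * a i ≤ (∑ i ∈ s, p i * (a i * Δ i)) / δ := by
  have hpb : ∑ i ∈ s, p i * b i = 1 :=
    calc ∑ i ∈ s, p i * b i = (∑ i ∈ s, p i * Δ i) / δ := by
          rw [sum_div]
          exact sum_congr rfl fun i hi => by rw [hb i hi, mul_div_assoc]
      _ = 1 := by rw [← hδ, div_self hδ0]
  have hpab : ∑ i ∈ s, p i * (a i * b i) = (∑ i ∈ s, p i * (a i * Δ i)) / δ := by
    rw [sum_div]
    exact sum_congr rfl fun i hi => by rw [hb i hi]; ring
  simpa [hpb, hp1, hpab] using hab.sum_mul_sum_le_sum_mul_sum hp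

theorem monovaryOn_of_comonotone {α : Type*} [LinearOrder α] {s : Finset α} {a b : α → ℝ}
    (h : (∀ u ∈ s, ∀ v ∈ s, u ≤ v → a u ≤ a v ∧ b u ≤ b v)
      ∨ (∀ u ∈ s, ∀ v ∈ s, u ≤ v → a v ≤ a u ∧ b v ≤ b u)) :
    MonovaryOn a b s :=
  h.elim
    (fun h => MonotoneOn.monovaryOn (fun u hu v hv huv => (h u hu v hv huv).1)
      fun u hu v hv huv => (h u hu v hv huv).2)
    (fun h => AntitoneOn.monovaryOn (fun u hu v hv huv => (h u hu v hv huv).1)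
      fun u hu v hv huv => (h u hu v hv huv).2)

section condMean

variable {Ω : Type*} [MeasurableSpace Ω] {μ : Measure Ω}

theorem condMean_eq_integral_cond (W : Ω → ℝ) (A : Set Ω) :
    condMean μ W A = ∫ ω, W ω ∂μ[|A] := by
  rw [condMean, ProbabilityTheory.cond, integral_smul_measure, ENNReal.toReal_inv, smul_eq_mul,
    div_eq_inv_mul]

theorem condMean_univ [IsProbabilityMeasure μ] (W : Ω → ℝ) :
    condMean μ W Set.univ = ∫ ω, W ω ∂μ := by
  simp [condMean]

theorem setIntegral_mul_eq_condMean_mul_setIntegral [IsFiniteMeasure μ] {W χ : Ω → ℝ}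
    {B : Set Ω} (hind : IndepFun W χ μ[|B]) (hW : AEStronglyMeasurable W μ)
    (hχ : AEStronglyMeasurable χ μ) :
    ∫ ω in B, W ω * χ ω ∂μ = condMean μ W B * ∫ ω in B, χ ω ∂μ := by
  by_cases hB : μ B = 0
  · simp [setIntegral_measure_zero _ hB]
  have hfac := hind.integral_fun_mul_eq_mul_integral (hW.mono_ac cond_absolutelyContinuous)
    (hχ.mono_ac cond_absolutelyContinuous)
  simp only [← condMean_eq_integral_cond, condMean] at hfac
  have hB' : (μ B).toReal ≠ 0 := ENNReal.toReal_ne_zero.2 ⟨hB, measure_ne_top μ B⟩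
  field_simp at hfac
  rw [condMean]
  field_simp
  linear_combination hfac

theorem setIntegral_preimage_inter_mul_eq_condMean_mul [IsFiniteMeasure μ]
    {β : Type*} [MeasurableSpace β] {W : Ω → ℝ} {V : Ω → β} {T : Set β} {g : β → ℝ}
    {B : Set Ω} (hind : IndepFun W V μ[|B]) (hW : AEStronglyMeasurable W μ)
    (hV : Measurable V) (hT : MeasurableSet T) (hg : Measurable g) :
    ∫ ω in V ⁻¹' T ∩ B, W ω * g (V ω) ∂μ
      = condMean μ W B * ∫ ω in V ⁻¹' T ∩ B, g (V ω) ∂μ := by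
  have h := setIntegral_mul_eq_condMean_mul_setIntegral
    (hind.comp measurable_id (hg.indicator hT)) hW ((hg.indicator hT).comp hV).aestronglyMeasurable
  simp only [Function.comp_apply, id, ← Set.indicator_comp_right, ← Set.indicator_mul_right] at h
  rwa [setIntegral_indicator (hV hT), setIntegral_indicator (hV hT), Set.inter_comm] at h

section Fibers

variable {α : Type*} [MeasurableSpace α] [MeasurableSingletonClass α] {s : Finset α}
  {U : Ω → α}

theorem sum_measureReal_fiber_eq_one [IsProbabilityMeasure μ] (hU : Measurable U)
    (hs : ∀ ω, U ω ∈ s) : ∑ u ∈ s, μ.real {ω | U ω = u} = 1 := by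
  change ∑ u ∈ s, μ.real (U ⁻¹' {u}) = 1
  rw [sum_measureReal_preimage_singleton s (fun u _ => hU (measurableSet_singleton u))
    fun _ _ => measure_ne_top μ _]
  simp [Set.preimage, hs]

theorem setIntegral_eq_sum_inter_fiber (hU : Measurable U) (hs : ∀ ω, U ω ∈ s)
    {S : Set Ω} (hS : MeasurableSet S) {W : Ω → ℝ} (hW : Integrable W μ) :
    ∫ ω in S, W ω ∂μ = ∑ u ∈ s, ∫ ω in S ∩ {ω | U ω = u}, W ω ∂μ := by
  have hcover : S = ⋃ u ∈ s, S ∩ {ω | U ω = u} := by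
    ext ω
    simpa using fun _ => hs ω
  conv_lhs => rw [hcover]
  refine integral_biUnion_finset s (fun u _ => hS.inter (hU (measurableSet_singleton u)))
    (fun u _ v _ huv => ?_) fun u _ => hW.integrableOn
  exact Set.disjoint_left.2 fun ω hu hv => huv (hu.2.symm.trans hv.2)

/-- Null arms and strata contribute `0` to both sides, since `x / 0 = 0`. -/
theorem condMean_eq_sum_condMean_inter_of_indep [IsFiniteMeasure μ] (hU : Measurable U)
    (hs : ∀ ω, U ω ∈ s) {S : Set Ω} (hS : MeasurableSet S) {W : Ω → ℝ} (hW : Integrable W μ)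
    (hindep : ∀ u ∈ s, μ (S ∩ {ω | U ω = u}) = μ S * μ {ω | U ω = u}) :
    condMean μ W S = ∑ u ∈ s, μ.real {ω | U ω = u} * condMean μ W (S ∩ {ω | U ω = u}) := by
  rw [condMean, setIntegral_eq_sum_inter_fiber hU hs hS hW, sum_div]
  refine sum_congr rfl fun u hu => ?_
  rw [condMean, hindep u hu, ENNReal.toReal_mul]
  simp only [← measureReal_def]
  by_cases hp : μ.real {ω | U ω = u} = 0
  · rw [setIntegral_measure_zero]
    · simp
    · rw [hindep u hu, (measureReal_eq_zero_iff).1 hp, mul_zero]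
  · rw [← div_div, mul_div_cancel₀ _ hp]

theorem integral_eq_sum_measureReal_mul_condMean [IsProbabilityMeasure μ] (hU : Measurable U)
    (hs : ∀ ω, U ω ∈ s) {W : Ω → ℝ} (hW : Integrable W μ) :
    ∫ ω, W ω ∂μ = ∑ u ∈ s, μ.real {ω | U ω = u} * condMean μ W {ω | U ω = u} := by
  simpa [condMean_univ] using
    condMean_eq_sum_condMean_inter_of_indep hU hs MeasurableSet.univ hW (by simp)

end Fibers

theorem integrable_of_eq_zero_or_eq_one [IsFiniteMeasure μ] {D : Ω → ℝ} (hD : Measurable D)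
    (hD01 : ∀ ω, D ω = 0 ∨ D ω = 1) : Integrable D μ :=
  (integrable_const (1 : ℝ)).mono' hD.aestronglyMeasurable
    (ae_of_all _ fun ω => by rcases hD01 ω with h | h <;> simp [h])

theorem integrable_mul_of_eq_zero_or_eq_one {D X : Ω → ℝ} (hD : Measurable D)
    (hD01 : ∀ ω, D ω = 0 ∨ D ω = 1) (hX : Integrable X μ) :
    Integrable (fun ω => D ω * X ω) μ :=
  hX.bdd_mul (c := 1) hD.aestronglyMeasurable
    (ae_of_all _ fun ω => by rcases hD01 ω with h | h <;> simp [h])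

theorem integrable_one_sub_mul_of_eq_zero_or_eq_one {D X : Ω → ℝ} (hD : Measurable D)
    (hD01 : ∀ ω, D ω = 0 ∨ D ω = 1) (hX : Integrable X μ) :
    Integrable (fun ω => (1 - D ω) * X ω) μ :=
  hX.bdd_mul (c := 1) (measurable_const.sub hD).aestronglyMeasurable
    (ae_of_all _ fun ω => by rcases hD01 ω with h | h <;> simp [h])

theorem condMean_observed_outcome_inter [IsFiniteMeasure μ] {Z D Y1 Y0 : Ω → ℝ} {B : Set Ω}
    {z : ℝ} (hZ : Measurable Z) (hD : Measurable D) (hD01 : ∀ ω, D ω = 0 ∨ D ω = 1)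
    (hY1 : Integrable Y1 μ) (hY0 : Integrable Y0 μ)
    (hind1 : IndepFun Y1 (fun ω => (Z ω, D ω)) μ[|B])
    (hind0 : IndepFun Y0 (fun ω => (Z ω, D ω)) μ[|B])
    (hC : μ ({ω | Z ω = z} ∩ B) ≠ 0) :
    condMean μ (fun ω => D ω * Y1 ω + (1 - D ω) * Y0 ω) ({ω | Z ω = z} ∩ B)
      = condMean μ Y0 B
        + condMean μ (fun ω => Y1 ω - Y0 ω) B * condMean μ D ({ω | Z ω = z} ∩ B) := by
  set C := {ω | Z ω = z} ∩ B
  have hV : Measurable fun ω => (Z ω, D ω) := hZ.prodMk hD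
  have hT : MeasurableSet {q : ℝ × ℝ | q.1 = z} := measurable_fst (measurableSet_singleton z)
  have h1 : ∫ ω in C, Y1 ω * D ω ∂μ = condMean μ Y1 B * ∫ ω in C, D ω ∂μ :=
    setIntegral_preimage_inter_mul_eq_condMean_mul hind1 hY1.aestronglyMeasurable hV hT
      measurable_snd
  have h0 : ∫ ω in C, Y0 ω * (1 - D ω) ∂μ = condMean μ Y0 B * ∫ ω in C, (1 - D ω) ∂μ :=
    setIntegral_preimage_inter_mul_eq_condMean_mul hind0 hY0.aestronglyMeasurable hV hT
      (measurable_const.sub measurable_snd)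
  have hsplit : ∫ ω in C, (D ω * Y1 ω + (1 - D ω) * Y0 ω) ∂μ
      = ∫ ω in C, Y1 ω * D ω ∂μ + ∫ ω in C, Y0 ω * (1 - D ω) ∂μ := by
    simp_rw [integral_add (integrable_mul_of_eq_zero_or_eq_one hD hD01 hY1).integrableOn
      (integrable_one_sub_mul_of_eq_zero_or_eq_one hD hD01 hY0).integrableOn, mul_comm]
  have hcompl : ∫ ω in C, (1 - D ω) ∂μ = μ.real C - ∫ ω in C, D ω ∂μ := by
    rw [integral_sub (integrable_const 1).integrableOn
      (integrable_of_eq_zero_or_eq_one hD hD01).integrableOn, setIntegral_const, smul_eq_mul,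
      mul_one]
  have hdiff : condMean μ (fun ω => Y1 ω - Y0 ω) B = condMean μ Y1 B - condMean μ Y0 B := by
    rw [condMean, condMean, condMean, integral_sub hY1.integrableOn hY0.integrableOn, sub_div]
  have hC' : μ.real C ≠ 0 := ENNReal.toReal_ne_zero.2 ⟨hC, measure_ne_top μ C⟩
  have hDC : condMean μ D C = (∫ ω in C, D ω ∂μ) / μ.real C := rfl
  rw [condMean, hsplit, h1, h0, hcompl, hdiff, hDC, ← measureReal_def]
  field_simp
  ring

end condMean

theorem wald_upper_bounds_ate_of_comonotone_general
    {Ω : Type*} [MeasurableSpace Ω] (μ : Measure Ω) [IsProbabilityMeasure μ]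
    (𝒰 : Finset ℝ)
    (Z D Y1 Y0 Y : Ω → ℝ) (U : Ω → ℝ)
    (hZmeas : Measurable Z) (hDmeas : Measurable D) (hUmeas : Measurable U)
    (hD01 : ∀ ω, D ω = 0 ∨ D ω = 1)
    (hUrange : ∀ ω, U ω ∈ 𝒰)
    (hY1int : Integrable Y1 μ) (hY0int : Integrable Y0 μ)
    (hYdef : ∀ ω, Y ω = D ω * Y1 ω + (1 - D ω) * Y0 ω)
    -- (A2) Z is independent of U
    (hA2 : ∀ (z : ℝ), ∀ u ∈ 𝒰,
      μ ({ω | Z ω = z} ∩ {ω | U ω = u}) = μ {ω | Z ω = z} * μ {ω | U ω = u})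
    -- (A1′, A4) under μ(· | U = u), each potential outcome is independent of (Z, D)
    (hA14one : ∀ u ∈ 𝒰, IndepFun Y1 (fun ω => (Z ω, D ω)) (μ[|{ω | U ω = u}]))
    (hA14zero : ∀ u ∈ 𝒰, IndepFun Y0 (fun ω => (Z ω, D ω)) (μ[|{ω | U ω = u}]))
    -- positivity
    (hPos : ∀ (z : ℝ), (z = 0 ∨ z = 1) → ∀ u ∈ 𝒰,
      0 < μ ({ω | Z ω = z} ∩ {ω | U ω = u}))
    -- δ^Y and δ^D
    (δY δD : ℝ)
    (hδY : δY = condMean μ Y {ω | Z ω = 1} - condMean μ Y {ω | Z ω = 0})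
    (hδD : δD = condMean μ D {ω | Z ω = 1} - condMean μ D {ω | Z ω = 0})
    (hδDne : δD ≠ 0)
    -- a(u) and b(u)
    (a b : ℝ → ℝ)
    (ha : ∀ u ∈ 𝒰, a u = condMean μ (fun ω => Y1 ω - Y0 ω) {ω | U ω = u})
    (hb : ∀ u ∈ 𝒰, b u =
      (condMean μ D ({ω | Z ω = 1} ∩ {ω | U ω = u})
        - condMean μ D ({ω | Z ω = 0} ∩ {ω | U ω = u})) / δD)
    -- both nondecreasing on 𝒰, or both nonincreasing on 𝒰
    (hMono : (∀ u ∈ 𝒰, ∀ v ∈ 𝒰, u ≤ v → a u ≤ a v ∧ b u ≤ b v)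
      ∨ (∀ u ∈ 𝒰, ∀ v ∈ 𝒰, u ≤ v → a v ≤ a u ∧ b v ≤ b u)) :
    δY / δD ≥ ∫ ω, (Y1 ω - Y0 ω) ∂μ := by
  set p : ℝ → ℝ := fun u => μ.real {ω | U ω = u}
  set Δ : ℝ → ℝ := fun u => condMean μ D ({ω | Z ω = 1} ∩ {ω | U ω = u})
    - condMean μ D ({ω | Z ω = 0} ∩ {ω | U ω = u})
  obtain rfl : Y = fun ω => D ω * Y1 ω + (1 - D ω) * Y0 ω := funext hYdef
  have hYint : Integrable (fun ω => D ω * Y1 ω + (1 - D ω) * Y0 ω) μ :=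
    (integrable_mul_of_eq_zero_or_eq_one hDmeas hD01 hY1int).add
      (integrable_one_sub_mul_of_eq_zero_or_eq_one hDmeas hD01 hY0int)
  have harm : ∀ W, Integrable W μ → ∀ z, condMean μ W {ω | Z ω = z}
      = ∑ u ∈ 𝒰, p u * condMean μ W ({ω | Z ω = z} ∩ {ω | U ω = u}) := fun W hW z =>
    condMean_eq_sum_condMean_inter_of_indep hUmeas hUrange (hZmeas (measurableSet_singleton z))
      hW (hA2 z)
  have hcell : ∀ z, (z = 0 ∨ z = 1) → ∀ u ∈ 𝒰,
      condMean μ (fun ω => D ω * Y1 ω + (1 - D ω) * Y0 ω) ({ω | Z ω = z} ∩ {ω | U ω = u})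
        = condMean μ Y0 {ω | U ω = u} + a u * condMean μ D ({ω | Z ω = z} ∩ {ω | U ω = u}) :=
    fun z hz u hu => by
      rw [ha u hu]
      exact condMean_observed_outcome_inter hZmeas hDmeas hD01 hY1int hY0int (hA14one u hu)
        (hA14zero u hu) (hPos z hz u hu).ne'
  have hδD' : δD = ∑ u ∈ 𝒰, p u * Δ u := by
    simp only [hδD, harm D (integrable_of_eq_zero_or_eq_one hDmeas hD01), Δ, mul_sub,
      sum_sub_distrib]
  have hδY' : δY = ∑ u ∈ 𝒰, p u * (a u * Δ u) := by
    rw [hδY, harm _ hYint, harm _ hYint, ← sum_sub_distrib]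
    exact sum_congr rfl fun u hu => by
      rw [hcell 1 (Or.inr rfl) u hu, hcell 0 (Or.inl rfl) u hu]; ring
  have hATE : ∫ ω, (Y1 ω - Y0 ω) ∂μ = ∑ u ∈ 𝒰, p u * a u := by
    rw [integral_eq_sum_measureReal_mul_condMean (W := fun ω => Y1 ω - Y0 ω) hUmeas hUrange
      (hY1int.sub hY0int)]
    exact sum_congr rfl fun u hu => by rw [ha u hu]
  rw [ge_iff_le, hATE, hδY']
  exact (monovaryOn_of_comonotone hMono).sum_mul_le_sum_mul_mul_div
    (fun _ _ => measureReal_nonneg) (sum_measureReal_fiber_eq_one hUmeas hUrange) hδD' hδDne hb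

/-- under the IV assumptions, positivity, `δ^D ≠ 0`, with `U` valued in a
finite subset `𝒰` of `ℝ`, if `u ↦ E[Y1 − Y0 | U=u]` and
`u ↦ (E[D | Z=1, U=u] − E[D | Z=0, U=u]) / δ^D` are both nondecreasing (or both
nonincreasing) on `𝒰`, then the Wald estimand upper-bounds the ATE:
`δ^Y / δ^D ≥ E[Y1 − Y0]`. -/
theorem wald_upper_bounds_ate_of_comonotone
    {Ω : Type*} [MeasurableSpace Ω] (μ : Measure Ω) [IsProbabilityMeasure μ]
    (𝒰 : Finset ℝ)
    (Z D Y1 Y0 Y : Ω → ℝ) (U : Ω → ℝ)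
    (hZmeas : Measurable Z) (hDmeas : Measurable D) (hUmeas : Measurable U)
    (hZ01 : ∀ ω, Z ω = 0 ∨ Z ω = 1) (hD01 : ∀ ω, D ω = 0 ∨ D ω = 1)
    (hUrange : ∀ ω, U ω ∈ 𝒰)
    (hY1int : Integrable Y1 μ) (hY0int : Integrable Y0 μ)
    (hYdef : ∀ ω, Y ω = D ω * Y1 ω + (1 - D ω) * Y0 ω)
    (hUpos : ∀ u ∈ 𝒰, 0 < μ {ω | U ω = u})
    -- (A2) Z is independent of U
    (hA2 : ∀ (z : ℝ), ∀ u ∈ 𝒰,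
      μ ({ω | Z ω = z} ∩ {ω | U ω = u}) = μ {ω | Z ω = z} * μ {ω | U ω = u})
    -- (A1′, A4) under μ(· | U = u), each potential outcome is independent of (Z, D)
    (hA14one : ∀ u ∈ 𝒰, IndepFun Y1 (fun ω => (Z ω, D ω)) (μ[|{ω | U ω = u}]))
    (hA14zero : ∀ u ∈ 𝒰, IndepFun Y0 (fun ω => (Z ω, D ω)) (μ[|{ω | U ω = u}]))
    -- positivity
    (hPos : ∀ (z : ℝ), (z = 0 ∨ z = 1) → ∀ u ∈ 𝒰,
      0 < μ ({ω | Z ω = z} ∩ {ω | U ω = u}))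
    -- δ^Y and δ^D
    (δY δD : ℝ)
    (hδY : δY = condMean μ Y {ω | Z ω = 1} - condMean μ Y {ω | Z ω = 0})
    (hδD : δD = condMean μ D {ω | Z ω = 1} - condMean μ D {ω | Z ω = 0})
    (hδDne : δD ≠ 0)
    -- a(u) and b(u)
    (a b : ℝ → ℝ)
    (ha : ∀ u ∈ 𝒰, a u = condMean μ (fun ω => Y1 ω - Y0 ω) {ω | U ω = u})
    (hb : ∀ u ∈ 𝒰, b u =
      (condMean μ D ({ω | Z ω = 1} ∩ {ω | U ω = u})
        - condMean μ D ({ω | Z ω = 0} ∩ {ω | U ω = u})) / δD)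
    -- both nondecreasing on 𝒰, or both nonincreasing on 𝒰
    (hMono : (∀ u ∈ 𝒰, ∀ v ∈ 𝒰, u ≤ v → a u ≤ a v ∧ b u ≤ b v)
      ∨ (∀ u ∈ 𝒰, ∀ v ∈ 𝒰, u ≤ v → a v ≤ a u ∧ b v ≤ b u)) :
    δY / δD ≥ ∫ ω, (Y1 ω - Y0 ω) ∂μ :=
  wald_upper_bounds_ate_of_comonotone_general μ 𝒰 Z D Y1 Y0 Y U hZmeas hDmeas hUmeas hD01 hUrange
    hY1int hY0int hYdef hA2 hA14one hA14zero hPos δY δD hδY hδD hδDne a b ha hb hMono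
end

section
/- (Robustness in model M3.) Suppose δ^D(x) ≠ 0 for every x ∈ 𝒳, and let δD* : 𝒳 → ℝ be an arbitrary nonvanishing function and pY*, pD* : 𝒳 → ℝ arbitrary functions (possibly misspecified). Then Φ(f, δ, δD*, pY*, pD*) = Δ, where f is the true conditional instrument density and δ is the true conditional Wald estimand. -/
/-!
The integral defining `Φ` splits over the finitely many cells `{Z = z, X = x}`. On a cell the weight
`(2Z - 1) / f(Z, X)` is the constant `±μ(X = x) / μ(Z = z, X = x)`, so with the true `f` the
cell contributes `±μ(X = x) / δD*(x) · (p_z^Y(x) - pY*(x) - (p_z^D(x) - pD*(x)) δ(x))`. The two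
cells of a fiber carry opposite weights of equal size, so `pY*` and `pD*` cancel, and what is
left, `δ^Y(x) - δ(x) δ^D(x)`, vanishes for the true Wald ratio; the term `δ(X)` integrates to `Δ`.
-/

open MeasureTheory

/-- The multiply robust functional
`Φ(f*, δ*, δD*, pY*, pD*) = E[ ((2Z−1)/f*(Z,X)) (1/δD*(X))
  (Y − pY*(X) − D δ*(X) + pD*(X) δ*(X)) + δ*(X) ]`. -/
noncomputable def mrFunctional {Ω 𝒳 : Type*} [MeasurableSpace Ω] (μ : Measure Ω)
    (Z D Y : Ω → ℝ) (X : Ω → 𝒳)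
    (fs : ℝ → 𝒳 → ℝ) (δs δDs pYs pDs : 𝒳 → ℝ) : ℝ :=
  ∫ ω, ((2 * Z ω - 1) / fs (Z ω) (X ω)) * (1 / δDs (X ω)) *
      (Y ω - pYs (X ω) - D ω * δs (X ω) + pDs (X ω) * δs (X ω)) + δs (X ω) ∂μ

/-- Stated in the shape the cell formula takes at `z = 1` and `z = 0`, with `f z x = a_z / m`. -/
theorem wald_weighted_cells_sum {m a₁ a₀ s δ y₁ y₀ d₁ d₀ k₁ k₂ : ℝ} (ha₁ : a₁ ≠ 0) (ha₀ : a₀ ≠ 0)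
    (hs : s ≠ 0) (hm : a₁ + a₀ = m) (hδ : δ * (d₁ - d₀) = y₁ - y₀) :
    a₁ * ((2 * 1 - 1) / (a₁ / m) * (1 / s) * (y₁ - k₁ - d₁ * δ + k₂ * δ) + δ)
      + a₀ * ((2 * 0 - 1) / (a₀ / m) * (1 / s) * (y₀ - k₁ - d₀ * δ + k₂ * δ) + δ) = m * δ := by
  have hw₁ : a₁ * ((2 * 1 - 1) / (a₁ / m) * (1 / s)) = m / s := by field_simp; ring
  have hw₀ : a₀ * ((2 * 0 - 1) / (a₀ / m) * (1 / s)) = -(m / s) := by field_simp; ring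
  linear_combination (y₁ - k₁ - d₁ * δ + k₂ * δ) * hw₁ + (y₀ - k₁ - d₀ * δ + k₂ * δ) * hw₀
    + δ * hm - m / s * hδ

section

variable {Ω 𝒳 : Type*}

theorem inter_union_inter_eq_of_binary {Z : Ω → ℝ} (hZ : ∀ ω, Z ω = 0 ∨ Z ω = 1) (S : Set Ω) :
    {ω | Z ω = 1} ∩ S ∪ {ω | Z ω = 0} ∩ S = S := by
  ext ω
  rcases hZ ω with h | h <;> simp [h]

theorem disjoint_inter_setOf_eq_one_zero (Z : Ω → ℝ) (S T : Set Ω) :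
    Disjoint ({ω | Z ω = 1} ∩ S) ({ω | Z ω = 0} ∩ T) :=
  Set.disjoint_left.2 fun _ h₁ h₀ => one_ne_zero (h₁.1.symm.trans h₀.1)

noncomputable def mrIntegrand (Z D Y : Ω → ℝ) (X : Ω → 𝒳) (fs : ℝ → 𝒳 → ℝ)
    (δs δDs pYs pDs : 𝒳 → ℝ) (ω : Ω) : ℝ :=
  ((2 * Z ω - 1) / fs (Z ω) (X ω)) * (1 / δDs (X ω)) *
      (Y ω - pYs (X ω) - D ω * δs (X ω) + pDs (X ω) * δs (X ω)) + δs (X ω)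

theorem mrIntegrand_eqOn_cell (Z D Y : Ω → ℝ) (X : Ω → 𝒳) (fs : ℝ → 𝒳 → ℝ)
    (δs δDs pYs pDs : 𝒳 → ℝ) (z : ℝ) (x : 𝒳) :
    Set.EqOn (mrIntegrand Z D Y X fs δs δDs pYs pDs)
      (fun ω => (2 * z - 1) / fs z x * (1 / δDs x) * (Y ω - pYs x - D ω * δs x + pDs x * δs x)
        + δs x)
      ({ω | Z ω = z} ∩ {ω | X ω = x}) := by
  rintro ω ⟨hz : Z ω = z, hx : X ω = x⟩
  simp only [mrIntegrand, hz, hx]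

variable [MeasurableSpace Ω] {μ : Measure Ω}

theorem mrFunctional_eq_integral_mrIntegrand (Z D Y : Ω → ℝ) (X : Ω → 𝒳) (fs : ℝ → 𝒳 → ℝ)
    (δs δDs pYs pDs : 𝒳 → ℝ) :
    mrFunctional μ Z D Y X fs δs δDs pYs pDs
      = ∫ ω, mrIntegrand Z D Y X fs δs δDs pYs pDs ω ∂μ := rfl

theorem setIntegral_affine_eq_measureReal_mul_condMean [IsFiniteMeasure μ] {Y D : Ω → ℝ}
    (hY : Integrable Y μ) (hD : Integrable D μ) {A : Set Ω} (hA : μ.real A ≠ 0)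
    (c k₁ k₂ k₃ k₄ : ℝ) :
    ∫ ω in A, c * (Y ω - k₁ - D ω * k₂ + k₃) + k₄ ∂μ
      = μ.real A * (c * (condMean μ Y A - k₁ - condMean μ D A * k₂ + k₃) + k₄) := by
  have hYA : IntegrableOn Y A μ := hY.integrableOn
  have hDA : IntegrableOn (fun ω => D ω * k₂) A μ := (hD.mul_const k₂).integrableOn
  have hYk : IntegrableOn (fun ω => Y ω - k₁) A μ := hYA.sub (integrable_const k₁)
  have hYDk : IntegrableOn (fun ω => Y ω - k₁ - D ω * k₂) A μ := hYk.sub hDA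
  have hYDkk : IntegrableOn (fun ω => Y ω - k₁ - D ω * k₂ + k₃) A μ :=
    hYDk.add (integrable_const k₃)
  rw [integral_add (hYDkk.const_mul c) (integrable_const k₄),
    integral_const_mul, integral_add hYDk (integrable_const k₃), integral_sub hYk hDA,
    integral_sub hYA (integrable_const k₁), integral_mul_const, setIntegral_const,
    setIntegral_const, setIntegral_const]
  simp only [condMean, ← measureReal_def, smul_eq_mul]
  field_simp

variable [MeasurableSpace 𝒳] [MeasurableSingletonClass 𝒳] {Z D Y : Ω → ℝ} {X : Ω → 𝒳}

theorem integral_eq_sum_setIntegral_fiber {E : Type*} [NormedAddCommGroup E] [NormedSpace ℝ E]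
    [Fintype 𝒳] (hX : Measurable X) {g : Ω → E} (hg : ∀ x, IntegrableOn g {ω | X ω = x} μ) :
    ∫ ω, g ω ∂μ = ∑ x, ∫ ω in {ω | X ω = x}, g ω ∂μ := by
  have hcover : ⋃ x, {ω | X ω = x} = Set.univ := Set.iUnion_eq_univ_iff.2 fun ω => ⟨X ω, rfl⟩
  have hdisj : Pairwise (Function.onFun Disjoint fun x => {ω | X ω = x}) := fun x y hxy =>
    Set.disjoint_left.2 fun ω (hx : X ω = x) (hy : X ω = y) => hxy (hx.symm.trans hy)
  rw [← integral_iUnion_fintype (s := fun x => {ω | X ω = x})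
      (fun x => hX (measurableSet_singleton x)) hdisj hg, hcover, setIntegral_univ]

theorem measurableSet_cell (hZ : Measurable Z) (hX : Measurable X) (z : ℝ) (x : 𝒳) :
    MeasurableSet ({ω | Z ω = z} ∩ {ω | X ω = x}) :=
  (hZ (measurableSet_singleton z)).inter (hX (measurableSet_singleton x))

variable [IsFiniteMeasure μ]

theorem integrableOn_mrIntegrand_cell (hZ : Measurable Z) (hX : Measurable X)
    (hY : Integrable Y μ) (hD : Integrable D μ) (fs : ℝ → 𝒳 → ℝ) (δs δDs pYs pDs : 𝒳 → ℝ)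
    (z : ℝ) (x : 𝒳) :
    IntegrableOn (mrIntegrand Z D Y X fs δs δDs pYs pDs) ({ω | Z ω = z} ∩ {ω | X ω = x}) μ := by
  have haffine : Integrable (fun ω => (2 * z - 1) / fs z x * (1 / δDs x) *
      (Y ω - pYs x - D ω * δs x + pDs x * δs x) + δs x) μ :=
    ((((hY.sub (integrable_const _)).sub (hD.mul_const _)).add (integrable_const _)).const_mul
      _).add (integrable_const _)
  exact haffine.integrableOn.congr_fun (mrIntegrand_eqOn_cell Z D Y X fs δs δDs pYs pDs z x).symm
    (measurableSet_cell hZ hX z x)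

theorem setIntegral_mrIntegrand_cell (hZ : Measurable Z) (hX : Measurable X)
    (hY : Integrable Y μ) (hD : Integrable D μ) (fs : ℝ → 𝒳 → ℝ) (δs δDs pYs pDs : 𝒳 → ℝ)
    (z : ℝ) (x : 𝒳) (hpos : μ.real ({ω | Z ω = z} ∩ {ω | X ω = x}) ≠ 0) :
    ∫ ω in {ω | Z ω = z} ∩ {ω | X ω = x}, mrIntegrand Z D Y X fs δs δDs pYs pDs ω ∂μ
      = μ.real ({ω | Z ω = z} ∩ {ω | X ω = x}) *
        ((2 * z - 1) / fs z x * (1 / δDs x) *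
          (condMean μ Y ({ω | Z ω = z} ∩ {ω | X ω = x}) - pYs x
            - condMean μ D ({ω | Z ω = z} ∩ {ω | X ω = x}) * δs x + pDs x * δs x) + δs x) := by
  rw [setIntegral_congr_fun (measurableSet_cell hZ hX z x)
    (mrIntegrand_eqOn_cell Z D Y X fs δs δDs pYs pDs z x)]
  exact setIntegral_affine_eq_measureReal_mul_condMean hY hD hpos _ _ _ _ _

theorem integrableOn_mrIntegrand_fiber (hZ : Measurable Z) (hX : Measurable X)
    (hZ01 : ∀ ω, Z ω = 0 ∨ Z ω = 1) (hY : Integrable Y μ) (hD : Integrable D μ)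
    (fs : ℝ → 𝒳 → ℝ) (δs δDs pYs pDs : 𝒳 → ℝ) (x : 𝒳) :
    IntegrableOn (mrIntegrand Z D Y X fs δs δDs pYs pDs) {ω | X ω = x} μ := by
  rw [← inter_union_inter_eq_of_binary hZ01 {ω | X ω = x}]
  exact (integrableOn_mrIntegrand_cell hZ hX hY hD fs δs δDs pYs pDs 1 x).union
    (integrableOn_mrIntegrand_cell hZ hX hY hD fs δs δDs pYs pDs 0 x)

theorem setIntegral_mrIntegrand_fiber (hZ : Measurable Z) (hX : Measurable X)
    (hZ01 : ∀ ω, Z ω = 0 ∨ Z ω = 1) (hY : Integrable Y μ) (hD : Integrable D μ)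
    {f : ℝ → 𝒳 → ℝ} {δ δDs : 𝒳 → ℝ} (pYs pDs : 𝒳 → ℝ) (x : 𝒳)
    (hpos : ∀ z, (z = 0 ∨ z = 1) → 0 < μ ({ω | Z ω = z} ∩ {ω | X ω = x}))
    (hf : ∀ z, f z x = (μ ({ω | Z ω = z} ∩ {ω | X ω = x})).toReal / (μ {ω | X ω = x}).toReal)
    (hWald : δ x * (condMean μ D ({ω | Z ω = 1} ∩ {ω | X ω = x})
        - condMean μ D ({ω | Z ω = 0} ∩ {ω | X ω = x}))
      = condMean μ Y ({ω | Z ω = 1} ∩ {ω | X ω = x})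
        - condMean μ Y ({ω | Z ω = 0} ∩ {ω | X ω = x}))
    (hδDs : δDs x ≠ 0) :
    ∫ ω in {ω | X ω = x}, mrIntegrand Z D Y X f δ δDs pYs pDs ω ∂μ
      = μ.real {ω | X ω = x} * δ x := by
  have hcell_ne : ∀ z, (z = 0 ∨ z = 1) → μ.real ({ω | Z ω = z} ∩ {ω | X ω = x}) ≠ 0 :=
    fun z hz => (ENNReal.toReal_pos (hpos z hz).ne' (measure_ne_top μ _)).ne'
  have hsplit := inter_union_inter_eq_of_binary hZ01 {ω | X ω = x}
  have hdisj := disjoint_inter_setOf_eq_one_zero Z {ω | X ω = x} {ω | X ω = x}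
  have hm : μ.real ({ω | Z ω = 1} ∩ {ω | X ω = x}) + μ.real ({ω | Z ω = 0} ∩ {ω | X ω = x})
      = μ.real {ω | X ω = x} := by
    rw [← measureReal_union hdisj (measurableSet_cell hZ hX 0 x), hsplit]
  have hint : ∫ ω in {ω | X ω = x}, mrIntegrand Z D Y X f δ δDs pYs pDs ω ∂μ
      = ∫ ω in {ω | Z ω = 1} ∩ {ω | X ω = x}, mrIntegrand Z D Y X f δ δDs pYs pDs ω ∂μ
        + ∫ ω in {ω | Z ω = 0} ∩ {ω | X ω = x}, mrIntegrand Z D Y X f δ δDs pYs pDs ω ∂μ := by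
    conv_lhs => rw [← hsplit]
    exact setIntegral_union hdisj (measurableSet_cell hZ hX 0 x)
      (integrableOn_mrIntegrand_cell hZ hX hY hD f δ δDs pYs pDs 1 x)
      (integrableOn_mrIntegrand_cell hZ hX hY hD f δ δDs pYs pDs 0 x)
  rw [hint, setIntegral_mrIntegrand_cell hZ hX hY hD f δ δDs pYs pDs 1 x (hcell_ne 1 (.inr rfl)),
    setIntegral_mrIntegrand_cell hZ hX hY hD f δ δDs pYs pDs 0 x (hcell_ne 0 (.inl rfl)), hf 1,
    hf 0]
  exact wald_weighted_cells_sum (hcell_ne 1 (.inr rfl)) (hcell_ne 0 (.inl rfl)) hδDs hm hWald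

end

theorem mr_robust_M3_general
    {Ω : Type*} [MeasurableSpace Ω] (μ : Measure Ω) [IsProbabilityMeasure μ]
    {𝒳 : Type*} [Fintype 𝒳] [MeasurableSpace 𝒳] [MeasurableSingletonClass 𝒳]
    (Z D Y : Ω → ℝ) (X : Ω → 𝒳)
    (hZmeas : Measurable Z) (hDmeas : Measurable D) (hXmeas : Measurable X)
    (hZ01 : ∀ ω, Z ω = 0 ∨ Z ω = 1) (hD01 : ∀ ω, D ω = 0 ∨ D ω = 1)
    (hYint : Integrable Y μ)
    -- positivity
    (hPos : ∀ (z : ℝ), (z = 0 ∨ z = 1) → ∀ (x : 𝒳),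
      0 < μ ({ω | Z ω = z} ∩ {ω | X ω = x}))
    -- f(z | x) = μ(Z = z | X = x)
    (f : ℝ → 𝒳 → ℝ)
    (hf : ∀ (z : ℝ) (x : 𝒳),
      f z x = (μ ({ω | Z ω = z} ∩ {ω | X ω = x})).toReal / (μ {ω | X ω = x}).toReal)
    -- p_z^Y, p_z^D, δ^Y, δ^D, and the conditional Wald estimand δ
    (pY pD : ℝ → 𝒳 → ℝ)
    (hpY : ∀ (z : ℝ) (x : 𝒳),
      pY z x = condMean μ Y ({ω | Z ω = z} ∩ {ω | X ω = x}))
    (hpD : ∀ (z : ℝ) (x : 𝒳),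
      pD z x = condMean μ D ({ω | Z ω = z} ∩ {ω | X ω = x}))
    (δY δD δ : 𝒳 → ℝ)
    (hδY : ∀ x, δY x = pY 1 x - pY 0 x)
    (hδD : ∀ x, δD x = pD 1 x - pD 0 x)
    (hδDne : ∀ x, δD x ≠ 0)
    (hδ : ∀ x, δ x = δY x / δD x)
    -- the average Wald estimand
    (Δ : ℝ) (hΔ : Δ = ∑ x : 𝒳, (μ {ω | X ω = x}).toReal * δ x)
    -- arbitrary candidate nuisance functions, with δD* nonvanishing
    (δDs : 𝒳 → ℝ) (hδDs : ∀ x, δDs x ≠ 0)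
    (pYs pDs : 𝒳 → ℝ) :
    mrFunctional μ Z D Y X f δ δDs pYs pDs = Δ := by
  have hDint : Integrable D μ := Integrable.of_bound hDmeas.aestronglyMeasurable 1
    (.of_forall fun ω => by rcases hD01 ω with h | h <;> simp [h])
  have hWald : ∀ x, δ x * (condMean μ D ({ω | Z ω = 1} ∩ {ω | X ω = x})
      - condMean μ D ({ω | Z ω = 0} ∩ {ω | X ω = x}))
      = condMean μ Y ({ω | Z ω = 1} ∩ {ω | X ω = x})
        - condMean μ Y ({ω | Z ω = 0} ∩ {ω | X ω = x}) := fun x => by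
    rw [← hpD, ← hpD, ← hpY, ← hpY, ← hδD, ← hδY, hδ, div_mul_cancel₀ _ (hδDne x)]
  rw [mrFunctional_eq_integral_mrIntegrand, hΔ, integral_eq_sum_setIntegral_fiber hXmeas
    (integrableOn_mrIntegrand_fiber hZmeas hXmeas hZ01 hYint hDint f δ δDs pYs pDs)]
  exact Finset.sum_congr rfl fun x _ => setIntegral_mrIntegrand_fiber hZmeas hXmeas hZ01 hYint
    hDint pYs pDs x (hPos · · x) (hf · x) (hWald x) (hδDs x)

/-- robustness in model `M3`: with the true instrument density `f`
and the true conditional Wald estimand `δ`, but an arbitrary nonvanishing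
(possibly misspecified) `δD*` and arbitrary `pY*, pD*`, the multiply robust
functional recovers the average Wald estimand: `Φ(f, δ, δD*, pY*, pD*) = Δ`. -/
theorem mr_robust_M3
    {Ω : Type*} [MeasurableSpace Ω] (μ : Measure Ω) [IsProbabilityMeasure μ]
    {𝒳 : Type*} [Fintype 𝒳] [MeasurableSpace 𝒳] [MeasurableSingletonClass 𝒳]
    (Z D Y : Ω → ℝ) (X : Ω → 𝒳)
    (hZmeas : Measurable Z) (hDmeas : Measurable D) (hXmeas : Measurable X)
    (hYmeas : Measurable Y)
    (hZ01 : ∀ ω, Z ω = 0 ∨ Z ω = 1) (hD01 : ∀ ω, D ω = 0 ∨ D ω = 1)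
    (hYint : Integrable Y μ)
    -- positivity
    (hPos : ∀ (z : ℝ), (z = 0 ∨ z = 1) → ∀ (x : 𝒳),
      0 < μ ({ω | Z ω = z} ∩ {ω | X ω = x}))
    -- f(z | x) = μ(Z = z | X = x)
    (f : ℝ → 𝒳 → ℝ)
    (hf : ∀ (z : ℝ) (x : 𝒳),
      f z x = (μ ({ω | Z ω = z} ∩ {ω | X ω = x})).toReal / (μ {ω | X ω = x}).toReal)
    -- p_z^Y, p_z^D, δ^Y, δ^D, and the conditional Wald estimand δ
    (pY pD : ℝ → 𝒳 → ℝ)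
    (hpY : ∀ (z : ℝ) (x : 𝒳),
      pY z x = condMean μ Y ({ω | Z ω = z} ∩ {ω | X ω = x}))
    (hpD : ∀ (z : ℝ) (x : 𝒳),
      pD z x = condMean μ D ({ω | Z ω = z} ∩ {ω | X ω = x}))
    (δY δD δ : 𝒳 → ℝ)
    (hδY : ∀ x, δY x = pY 1 x - pY 0 x)
    (hδD : ∀ x, δD x = pD 1 x - pD 0 x)
    (hδDne : ∀ x, δD x ≠ 0)
    (hδ : ∀ x, δ x = δY x / δD x)
    -- the average Wald estimand
    (Δ : ℝ) (hΔ : Δ = ∑ x : 𝒳, (μ {ω | X ω = x}).toReal * δ x)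
    -- arbitrary candidate nuisance functions, with δD* nonvanishing
    (δDs : 𝒳 → ℝ) (hδDs : ∀ x, δDs x ≠ 0)
    (pYs pDs : 𝒳 → ℝ) :
    mrFunctional μ Z D Y X f δ δDs pYs pDs = Δ :=
  mr_robust_M3_general μ Z D Y X hZmeas hDmeas hXmeas hZ01 hD01 hYint hPos f hf pY pD hpY hpD δY δD
    δ hδY hδD hδDne hδ Δ hΔ δDs hδDs pYs pDs
end

section
/- (Double robustness of the g-estimating equation for δ^D.) (i) For every function w : {0,1} × 𝒳 → ℝ and every x ∈ 𝒳, E[ ( D − δ^D(X)·Z − p_0^D(X) ) · w(Z, X) | X = x ] = 0, where δ^D and p_0^D are the true nuisance functions. (ii) For every function p* : 𝒳 → ℝ and every x ∈ 𝒳, E[ ( D − δ^D(X)·Z − p*(X) ) · (2Z − 1)/f(Z | X) | X = x ] = 0, where f is the true conditional instrument density. -/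
/-!
On the stratum `{Z = z, X = x}` both integrands have the form `(D - c) * k` with constants
`c, k`, so their integral there is `(p_z^D(x) - c) * k * μ(Z = z, X = x)`.
In (i) the centring constant is `p_z^D(x)` itself on both strata, so each stratum contributes
zero. In (ii) the weight `(2z - 1) / f(z | x)` cancels the stratum mass down to `± μ(X = x)`,
and the two contributions cancel for every `p*` because `δ^D = p_1^D - p_0^D`.
-/

open MeasureTheory

section CondMean

variable {Ω : Type*} [MeasurableSpace Ω] {μ : Measure Ω}

lemma condMean_congr {W W' : Ω → ℝ} {A : Set Ω} (hA : MeasurableSet A)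
    (h : Set.EqOn W W' A) : condMean μ W A = condMean μ W' A := by
  rw [condMean, condMean, setIntegral_congr_fun hA h]

/-- Holds also when `μ A = 0`: then both sides vanish, whatever the junk value of `condMean`. -/
lemma setIntegral_eq_condMean_mul [IsFiniteMeasure μ] (W : Ω → ℝ) (A : Set Ω) :
    ∫ ω in A, W ω ∂μ = condMean μ W A * μ.real A := by
  by_cases hA : μ A = 0
  · simp [Measure.restrict_eq_zero.mpr hA, Measure.real, hA]
  · rw [condMean, Measure.real, div_mul_cancel₀]
    exact ENNReal.toReal_ne_zero.2 ⟨hA, measure_ne_top μ A⟩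

lemma setIntegral_sub_const_mul_const [IsFiniteMeasure μ] {W : Ω → ℝ} {A : Set Ω}
    (hW : IntegrableOn W A μ) (c k : ℝ) :
    ∫ ω in A, (W ω - c) * k ∂μ = (condMean μ W A - c) * k * μ.real A := by
  rw [integral_mul_const, integral_sub hW (integrableOn_const (measure_ne_top μ A)),
    setIntegral_const, setIntegral_eq_condMean_mul, smul_eq_mul]
  ring

lemma setIntegral_eq_add_of_zero_or_one {Z : Ω → ℝ} (hZ : Measurable Z)
    (hZ01 : ∀ ω, Z ω = 0 ∨ Z ω = 1) {A : Set Ω} (hA : MeasurableSet A) {g : Ω → ℝ}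
    (h0 : IntegrableOn g ({ω | Z ω = 0} ∩ A) μ) (h1 : IntegrableOn g ({ω | Z ω = 1} ∩ A) μ) :
    ∫ ω in A, g ω ∂μ =
      ∫ ω in {ω | Z ω = 0} ∩ A, g ω ∂μ + ∫ ω in {ω | Z ω = 1} ∩ A, g ω ∂μ := by
  have hsplit : A = ({ω | Z ω = 0} ∩ A) ∪ ({ω | Z ω = 1} ∩ A) := by
    rw [← Set.union_inter_distrib_right, eq_comm, Set.inter_eq_right]
    exact fun ω _ ↦ hZ01 ω
  have hdisj : Disjoint ({ω | Z ω = 0} ∩ A) ({ω | Z ω = 1} ∩ A) :=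
    Set.disjoint_left.2 fun ω h0 h1 ↦ zero_ne_one (h0.1.symm.trans h1.1)
  conv_lhs => rw [hsplit]
  exact setIntegral_union hdisj ((hZ (measurableSet_singleton 1)).inter hA) h0 h1

lemma condMean_sub_mul_eq_of_zero_or_one [IsFiniteMeasure μ] {Z W : Ω → ℝ}
    (hZ : Measurable Z) (hZ01 : ∀ ω, Z ω = 0 ∨ Z ω = 1) {A : Set Ω} (hA : MeasurableSet A)
    (hW : IntegrableOn W A μ) (c k : ℝ → ℝ) :
    condMean μ (fun ω ↦ (W ω - c (Z ω)) * k (Z ω)) A =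
      ((condMean μ W ({ω | Z ω = 0} ∩ A) - c 0) * k 0 * μ.real ({ω | Z ω = 0} ∩ A)
        + (condMean μ W ({ω | Z ω = 1} ∩ A) - c 1) * k 1 * μ.real ({ω | Z ω = 1} ∩ A))
        / μ.real A := by
  have hmeas : ∀ z, MeasurableSet ({ω | Z ω = z} ∩ A) :=
    fun z ↦ (hZ (measurableSet_singleton z)).inter hA
  have heq : ∀ z, Set.EqOn (fun ω ↦ (W ω - c (Z ω)) * k (Z ω)) (fun ω ↦ (W ω - c z) * k z)
      ({ω | Z ω = z} ∩ A) := fun z ω hω ↦ by simp only [hω.1.out]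
  have hint : ∀ z, IntegrableOn (fun ω ↦ (W ω - c (Z ω)) * k (Z ω)) ({ω | Z ω = z} ∩ A) μ :=
    fun z ↦ IntegrableOn.congr_fun (((hW.mono_set Set.inter_subset_right).sub
      (integrableOn_const (measure_ne_top μ _))).mul_const (k z)) (heq z).symm (hmeas z)
  rw [condMean, ← Measure.real_def,
    setIntegral_eq_add_of_zero_or_one hZ hZ01 hA (hint 0) (hint 1),
    setIntegral_congr_fun (hmeas 0) (heq 0), setIntegral_congr_fun (hmeas 1) (heq 1),
    setIntegral_sub_const_mul_const (hW.mono_set Set.inter_subset_right),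
    setIntegral_sub_const_mul_const (hW.mono_set Set.inter_subset_right)]

end CondMean

theorem g_equation_deltaD_doubly_robust_general
    {Ω : Type*} [MeasurableSpace Ω] (μ : Measure Ω) [IsProbabilityMeasure μ]
    {𝒳 : Type*} [MeasurableSpace 𝒳] [MeasurableSingletonClass 𝒳]
    (Z D : Ω → ℝ) (X : Ω → 𝒳)
    (hZmeas : Measurable Z) (hDmeas : Measurable D) (hXmeas : Measurable X)
    (hZ01 : ∀ ω, Z ω = 0 ∨ Z ω = 1) (hD01 : ∀ ω, D ω = 0 ∨ D ω = 1)
    -- positivity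
    (hPos : ∀ (z : ℝ), (z = 0 ∨ z = 1) → ∀ (x : 𝒳),
      0 < μ ({ω | Z ω = z} ∩ {ω | X ω = x}))
    -- f(z | x) = μ(Z = z | X = x)
    (f : ℝ → 𝒳 → ℝ)
    (hf : ∀ (z : ℝ) (x : 𝒳),
      f z x = (μ ({ω | Z ω = z} ∩ {ω | X ω = x})).toReal / (μ {ω | X ω = x}).toReal)
    -- p_z^D(x) = E[D | Z=z, X=x] and δ^D(x) = p_1^D(x) − p_0^D(x)
    (pD : ℝ → 𝒳 → ℝ)
    (hpD : ∀ (z : ℝ) (x : 𝒳),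
      pD z x = condMean μ D ({ω | Z ω = z} ∩ {ω | X ω = x}))
    (δD : 𝒳 → ℝ) (hδD : ∀ x, δD x = pD 1 x - pD 0 x) :
    (∀ (w : ℝ → 𝒳 → ℝ) (x : 𝒳),
      condMean μ
          (fun ω => (D ω - δD (X ω) * Z ω - pD 0 (X ω)) * w (Z ω) (X ω))
          {ω | X ω = x} = 0)
    ∧ (∀ (ps : 𝒳 → ℝ) (x : 𝒳),
      condMean μ
          (fun ω => (D ω - δD (X ω) * Z ω - ps (X ω)) * (2 * Z ω - 1) / f (Z ω) (X ω))
          {ω | X ω = x} = 0) := by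
  have hX : ∀ x, MeasurableSet {ω | X ω = x} := fun x ↦ hXmeas (measurableSet_singleton x)
  have hDint : Integrable D μ := Integrable.of_bound hDmeas.aestronglyMeasurable 1
    (ae_of_all _ fun ω ↦ by rcases hD01 ω with h | h <;> simp [h])
  have hweight : ∀ z, (z = 0 ∨ z = 1) → ∀ x,
      (2 * z - 1) / f z x * μ.real ({ω | Z ω = z} ∩ {ω | X ω = x}) =
        (2 * z - 1) * μ.real {ω | X ω = x} := fun z hz x ↦ by
    rw [hf, ← Measure.real_def, ← Measure.real_def, div_div_eq_mul_div, div_mul_cancel₀]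
    exact ENNReal.toReal_ne_zero.2 ⟨(hPos z hz x).ne', measure_ne_top μ _⟩
  refine ⟨fun w x ↦ ?_, fun ps x ↦ ?_⟩
  · rw [condMean_congr (hX x) (W' := fun ω ↦ (D ω - (δD x * Z ω + pD 0 x)) * w (Z ω) x)
        (fun ω (hω : X ω = x) ↦ by simp only [hω]; ring),
      condMean_sub_mul_eq_of_zero_or_one hZmeas hZ01 (hX x) hDint.integrableOn
        (fun z ↦ δD x * z + pD 0 x) (fun z ↦ w z x), ← hpD, ← hpD, hδD]
    ring
  · rw [condMean_congr (hX x)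
        (W' := fun ω ↦ (D ω - (δD x * Z ω + ps x)) * ((2 * Z ω - 1) / f (Z ω) x))
        (fun ω (hω : X ω = x) ↦ by simp only [hω]; ring),
      condMean_sub_mul_eq_of_zero_or_one hZmeas hZ01 (hX x) hDint.integrableOn
        (fun z ↦ δD x * z + ps x) (fun z ↦ (2 * z - 1) / f z x),
      mul_assoc _ _ (μ.real _), mul_assoc _ _ (μ.real _), hweight 0 (Or.inl rfl),
      hweight 1 (Or.inr rfl), ← hpD, ← hpD, hδD]
    ring

/-- double robustness of the g-estimating equation for `δ^D`:
(i) for every `w : {0,1} × 𝒳 → ℝ` and every `x`,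
`E[ (D − δ^D(X) Z − p_0^D(X)) w(Z,X) | X = x ] = 0` with the true nuisances;
(ii) for every `p* : 𝒳 → ℝ` and every `x`,
`E[ (D − δ^D(X) Z − p*(X)) (2Z−1)/f(Z|X) | X = x ] = 0` with the true `f`. -/
theorem g_equation_deltaD_doubly_robust
    {Ω : Type*} [MeasurableSpace Ω] (μ : Measure Ω) [IsProbabilityMeasure μ]
    {𝒳 : Type*} [Fintype 𝒳] [MeasurableSpace 𝒳] [MeasurableSingletonClass 𝒳]
    (Z D : Ω → ℝ) (X : Ω → 𝒳)
    (hZmeas : Measurable Z) (hDmeas : Measurable D) (hXmeas : Measurable X)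
    (hZ01 : ∀ ω, Z ω = 0 ∨ Z ω = 1) (hD01 : ∀ ω, D ω = 0 ∨ D ω = 1)
    -- positivity
    (hPos : ∀ (z : ℝ), (z = 0 ∨ z = 1) → ∀ (x : 𝒳),
      0 < μ ({ω | Z ω = z} ∩ {ω | X ω = x}))
    -- f(z | x) = μ(Z = z | X = x)
    (f : ℝ → 𝒳 → ℝ)
    (hf : ∀ (z : ℝ) (x : 𝒳),
      f z x = (μ ({ω | Z ω = z} ∩ {ω | X ω = x})).toReal / (μ {ω | X ω = x}).toReal)
    -- p_z^D(x) = E[D | Z=z, X=x] and δ^D(x) = p_1^D(x) − p_0^D(x)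
    (pD : ℝ → 𝒳 → ℝ)
    (hpD : ∀ (z : ℝ) (x : 𝒳),
      pD z x = condMean μ D ({ω | Z ω = z} ∩ {ω | X ω = x}))
    (δD : 𝒳 → ℝ) (hδD : ∀ x, δD x = pD 1 x - pD 0 x) :
    (∀ (w : ℝ → 𝒳 → ℝ) (x : 𝒳),
      condMean μ
          (fun ω => (D ω - δD (X ω) * Z ω - pD 0 (X ω)) * w (Z ω) (X ω))
          {ω | X ω = x} = 0)
    ∧ (∀ (ps : 𝒳 → ℝ) (x : 𝒳),
      condMean μ
          (fun ω => (D ω - δD (X ω) * Z ω - ps (X ω)) * (2 * Z ω - 1) / f (Z ω) (X ω))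
          {ω | X ω = x} = 0) :=
  g_equation_deltaD_doubly_robust_general μ Z D X hZmeas hDmeas hXmeas hZ01 hD01 hPos f hf pD hpD δD
    hδD
end
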